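/- The carry-rule system C_k C_k → C_k Z_k, C_k Z_k → C_{k+1} Z_k, C_{k+1} Z_k → C_{k+1}, C_k → c_k correctly computes binary representations: for every positive integer m, the string C_0^m rewrites (under the closure of these context-sensitive rules) to the string consisting of one c_i for each bit position i where the binary representation of m has a 1, concatenated in order. -/

import Mathlib

/-- A general (context-sensitive style) rewriting rule: a left-hand side and a
right-hand side, both strings of symbols. -/
structure GenRule (T N : Type*) where
  lhs : List (Symbol T N)
  rhs : List (Symbol T N)

/-- One rewriting step: some rule of `R` is applied to a contiguous substring. -/
def GStep {T N : Type*} (R : Set (GenRule T N)) (u v : List (Symbol T N)) : Prop :=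
  ∃ r ∈ R, ∃ x y : List (Symbol T N), u = x ++ r.lhs ++ y ∧ v = x ++ r.rhs ++ y

/-- Rewriting: the reflexive-transitive closure of single steps. -/
def GDerives {T N : Type*} (R : Set (GenRule T N)) :
    List (Symbol T N) → List (Symbol T N) → Prop :=
  Relation.ReflTransGen (GStep R)

/-- Nonterminals: the digit counters `C k` and the carry markers `Z k`. -/
inductive CNT
  | C (k : ℕ)
  | Z (k : ℕ)

/-- Shorthand for nonterminal symbols (the terminal `k : ℕ` codes `c_k`). -/
def nt (x : CNT) : Symbol ℕ CNT := Symbol.nonterminal x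

/-- The carry-rule system `C_k C_k → C_k Z_k`, `C_k Z_k → C_{k+1} Z_k`,
`C_{k+1} Z_k → C_{k+1}`, `C_k → c_k`, for `k = 0, …, K`. -/
def carryRules (K : ℕ) : Set (GenRule ℕ CNT) :=
  { r |
    (∃ k ≤ K, r = ⟨[nt (.C k), nt (.C k)], [nt (.C k), nt (.Z k)]⟩) ∨
    (∃ k ≤ K, r = ⟨[nt (.C k), nt (.Z k)], [nt (.C (k + 1)), nt (.Z k)]⟩) ∨
    (∃ k ≤ K, r = ⟨[nt (.C (k + 1)), nt (.Z k)], [nt (.C (k + 1))]⟩) ∨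
    (∃ k ≤ K, r = ⟨[nt (.C k)], [Symbol.terminal k]⟩) }

/-- The binary representation of `m` as a string of terminals: one `c_i` for
each bit position `i` where `m` has a `1`, concatenated in (descending) order. -/
def binString (m : ℕ) : List ℕ :=
  ((List.range (Nat.size m)).filter fun i => m.testBit i).reverse

/-! Three carry steps merge two adjacent digits, `C_k C_k ⇒ C_k Z_k ⇒ C_{k+1} Z_k ⇒ C_{k+1}`,
so pairing up `C_k^m` from the left gives `C_{k+1}^(m / 2) C_k^(m % 2)`. The trailing symbol is
the lowest bit of `m` and the prefix is the same problem for `m / 2` one level up; matching this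
with `binString m = (binString (m / 2) shifted by one) ++ (lowest bit)` is a strong induction
on `m`. -/

section Rewriting

variable {T N : Type*} {R : Set (GenRule T N)}

theorem GStep.append_left {u v : List (Symbol T N)} (h : GStep R u v) (x : List (Symbol T N)) :
    GStep R (x ++ u) (x ++ v) := by
  obtain ⟨r, hr, a, b, rfl, rfl⟩ := h
  exact ⟨r, hr, x ++ a, b, by simp, by simp⟩

theorem GStep.append_right {u v : List (Symbol T N)} (h : GStep R u v) (y : List (Symbol T N)) :
    GStep R (u ++ y) (v ++ y) := by
  obtain ⟨r, hr, a, b, rfl, rfl⟩ := h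
  exact ⟨r, hr, a, b ++ y, by simp, by simp⟩

theorem GDerives.of_mem {u v : List (Symbol T N)} (h : ⟨u, v⟩ ∈ R) : GDerives R u v :=
  .single ⟨_, h, [], [], by simp, by simp⟩

theorem GDerives.trans {u v w : List (Symbol T N)} (huv : GDerives R u v)
    (hvw : GDerives R v w) : GDerives R u w :=
  Relation.ReflTransGen.trans huv hvw

theorem GDerives.append {u u' v v' : List (Symbol T N)} (hu : GDerives R u u')
    (hv : GDerives R v v') : GDerives R (u ++ v) (u' ++ v') :=
  (hu.lift (· ++ v) fun _ _ h => h.append_right v).trans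
    (hv.lift (u' ++ ·) fun _ _ h => h.append_left u')

theorem GDerives.replicate {a b : Symbol T N} (h : GDerives R [a] [b]) (n : ℕ) :
    GDerives R (List.replicate n a) (List.replicate n b) := by
  induction n with
  | zero => exact .refl
  | succ n ih => exact h.append ih

theorem GDerives.replicate_two_mul {a b : Symbol T N} (h : GDerives R [a, a] [b]) (n : ℕ) :
    GDerives R (List.replicate (2 * n) a) (List.replicate n b) := by
  induction n with
  | zero => exact .refl
  | succ n ih =>
    rw [Nat.mul_succ, List.replicate_add, List.replicate_succ' (n := n)]
    exact ih.append h

end Rewriting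

section CarryRules

variable {K k : ℕ}

theorem carryRules_merge (hk : k ≤ K) :
    GDerives (carryRules K) [nt (.C k), nt (.C k)] [nt (.C (k + 1))] :=
  ((GDerives.of_mem (Or.inl ⟨k, hk, rfl⟩)).trans
    (GDerives.of_mem (Or.inr (Or.inl ⟨k, hk, rfl⟩)))).trans
    (GDerives.of_mem (Or.inr (Or.inr (Or.inl ⟨k, hk, rfl⟩))))

theorem carryRules_terminal (hk : k ≤ K) :
    GDerives (carryRules K) [nt (.C k)] [Symbol.terminal k] :=
  GDerives.of_mem (Or.inr (Or.inr (Or.inr ⟨k, hk, rfl⟩)))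

end CarryRules

theorem Nat.size_eq_size_div_two_add_one {m : ℕ} (hm : m ≠ 0) : m.size = (m / 2).size + 1 := by
  conv_lhs => rw [← Nat.bit_testBit_zero_shiftRight_one m]
  rw [Nat.size_bit]
  · simp [Nat.shiftRight_eq_div_pow]
  · rwa [Nat.bit_testBit_zero_shiftRight_one]

theorem binString_eq_map_succ_append (m : ℕ) :
    binString m = (binString (m / 2)).map (· + 1) ++ List.replicate (m % 2) 0 := by
  rcases eq_or_ne m 0 with rfl | hm
  · rfl
  unfold binString
  rw [Nat.size_eq_size_div_two_add_one hm, List.range_succ_eq_map, List.filter_cons,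
    List.filter_map]
  rcases Nat.mod_two_eq_zero_or_one m with h | h <;>
    simp [h, Nat.testBit_zero, Nat.testBit_succ, Function.comp_def]

theorem carryRules_derives_binString {K : ℕ} (m k : ℕ) (hK : m.size + k ≤ K + 1) :
    GDerives (carryRules K) (List.replicate m (nt (.C k)))
      ((binString m).map fun i => Symbol.terminal (k + i)) := by
  induction m using Nat.strong_induction_on generalizing k with
  | _ m ih =>
    rcases eq_or_ne m 0 with rfl | hm
    · exact .refl
    have hsize := Nat.size_eq_size_div_two_add_one hm
    have hk : k ≤ K := by omega
    have hpairs := (GDerives.replicate_two_mul (carryRules_merge hk) (m / 2)).append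
      ((carryRules_terminal hk).replicate (m % 2))
    rw [← List.replicate_add, Nat.div_add_mod] at hpairs
    have hhalf := ih (m / 2) (Nat.div_lt_self (by omega) one_lt_two) (k + 1) (by omega)
    rw [binString_eq_map_succ_append m, List.map_append, List.map_map, List.map_replicate,
      Nat.add_zero]
    convert hpairs.trans (hhalf.append .refl) using 4 with i
    simp only [Function.comp_apply, Nat.add_right_comm k 1, Nat.add_assoc]

theorem carry_rules_compute_binary_general (K m : ℕ)
    (hK : Nat.size m ≤ K + 1) :
    GDerives (carryRules K) (List.replicate m (nt (.C 0)))
      ((binString m).map Symbol.terminal) := by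
  simpa using carryRules_derives_binString m 0 hK

/-- The carry-rule system correctly computes binary representations: for every
positive integer `m` (whose binary representation fits within the available
indices `0, …, K`), the string `C_0 ^ m` rewrites to the string consisting of
one `c_i` for each bit position `i` where the binary representation of `m` has
a `1`, concatenated in order. -/
theorem carry_rules_compute_binary (K m : ℕ) (hm : 0 < m)
    (hK : Nat.size m ≤ K + 1) :
    GDerives (carryRules K) (List.replicate m (nt (.C 0)))
      ((binString m).map Symbol.terminal) :=
  carry_rules_compute_binary_general K m hK
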